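/- Under assumptions A1–A2 and x₀ ∈ ℝ, let (F_t)_{t∈ℕ₀} be the natural filtration of the state-input data (Z_t)_{t∈ℕ₀} of the closed-loop system under the AICMSS control strategy, and for ζ = (ζ₁, ζ₂) ∈ ℝ² define B_{t+1}(ζ) := 𝔼[ ζ₁X_{t+1} + ζ₂·σ_D(G_{t+1}X_{t+1}) | F_t ] + ζ₂V_{t+1}. Then for all ζ ∈ ℝ² and all t ∈ ℕ₀, 𝔼[ |B_{t+1}(ζ)| | F_t ] ≥ |ζ₂|·C/2 almost surely. -/

import Mathlib

open MeasureTheory ProbabilityTheory Real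
open scoped ENNReal NNReal RealInnerProductSpace Matrix

noncomputable section

/-- The saturation function `σ_r`. -/
def sat (r x : ℝ) : ℝ := if |x| ≤ r then x else r * x / |x|

/-- The Moore–Penrose pseudoinverse of a real matrix, characterized (uniquely) by the four
Penrose equations. -/
def pinv {m n : ℕ} (A : Matrix (Fin m) (Fin n) ℝ) : Matrix (Fin n) (Fin m) ℝ :=
  letI := Classical.propDecidable
  if h : ∃ B : Matrix (Fin n) (Fin m) ℝ,
      A * B * A = A ∧ B * A * B = B ∧ (A * B)ᵀ = A * B ∧ (B * A)ᵀ = B * A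
  then h.choose else 0

/-- `ℝ²` with the Euclidean norm. -/
abbrev E2 := EuclideanSpace ℝ (Fin 2)

/-- The uniform probability distribution on `[-C, C]`. -/
def uniformLaw (C : ℝ) : Measure ℝ :=
  (ENNReal.ofReal (2 * C))⁻¹ • (volume.restrict (Set.Icc (-C) C))

/-- The closed-loop system under the AICMSS control strategy, together with the standing
assumptions A1–A2 of the paper. -/
structure AICMSS (Ω : Type*) [MeasurableSpace Ω] (P : Measure Ω) where
  a : ℝ
  b : ℝ
  σW : ℝ
  Umax : ℝ
  C : ℝ
  x0 : ℝ
  aInit : ℝ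
  bInit : ℝ
  W : ℕ → Ω → ℝ
  V : ℕ → Ω → ℝ
  X : ℕ → Ω → ℝ
  U : ℕ → Ω → ℝ
  θhat : ℕ → Ω → E2
  G : ℕ → Ω → ℝ
  hσW : 0 < σW
  ha : |a| ≤ 1
  hb : b ≠ 0
  hCpos : 0 < C
  hCU : C < Umax
  hbInit : bInit ≠ 0
  measW : ∀ t, Measurable (W t)
  measV : ∀ t, Measurable (V t)
  measX : ∀ t, Measurable (X t)
  measU : ∀ t, Measurable (U t)
  measθ : ∀ t, Measurable (θhat t)
  hWlaw : ∀ t, P.map (W t) = gaussianReal 0 ⟨σW ^ 2, sq_nonneg σW⟩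
  hVlaw : ∀ t, P.map (V t) = uniformLaw C
  hIndep : iIndepFun (Sum.elim W V) P
  hX0 : ∀ ω, X 0 ω = x0
  hGinit : ∀ t ω, t ≤ 1 → G t ω = -(aInit / bInit)
  hG : ∀ t ω, 2 ≤ t →
    G t ω = -(WithLp.equiv 2 (Fin 2 → ℝ) (θhat (t - 1) ω) 0 /
              WithLp.equiv 2 (Fin 2 → ℝ) (θhat (t - 1) ω) 1)
  hU : ∀ t ω, U t ω = sat (Umax - C) (G t ω * X t ω) + V t ω
  hXrec : ∀ t ω, X (t + 1) ω = a * X t ω + b * U t ω + W t ω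
  hθ : ∀ t ω, 1 ≤ t →
    θhat t ω = (WithLp.equiv 2 (Fin 2 → ℝ)).symm
      ((pinv ((Matrix.of fun (s : Fin t) (j : Fin 2) =>
            if j = 0 then X (s.1 + 1) ω else U (s.1 + 1) ω)ᵀ *
          (Matrix.of fun (s : Fin t) (j : Fin 2) =>
            if j = 0 then X (s.1 + 1) ω else U (s.1 + 1) ω)) *
        (Matrix.of fun (s : Fin t) (j : Fin 2) =>
            if j = 0 then X (s.1 + 1) ω else U (s.1 + 1) ω)ᵀ).mulVec
        fun s : Fin t => X (s.1 + 2) ω)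

namespace AICMSS

variable {Ω : Type*} [MeasurableSpace Ω] {P : Measure Ω}

/-- The state-input data `Z_t = (X_t, U_t)`. -/
def Z (S : AICMSS Ω P) (t : ℕ) (ω : Ω) : E2 :=
  (WithLp.equiv 2 (Fin 2 → ℝ)).symm ![S.X t ω, S.U t ω]

/-- The true parameter `θ* = (a, b)`. -/
def θstar (S : AICMSS Ω P) : E2 := (WithLp.equiv 2 (Fin 2 → ℝ)).symm ![S.a, S.b]

/-- `D = U_max - C`. -/
def D (S : AICMSS Ω P) : ℝ := S.Umax - S.C

/-- The empirical covariance matrix `∑_{t=1}^i Z_t Z_tᵀ`. -/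
def covMat (S : AICMSS Ω P) (i : ℕ) (ω : Ω) : Matrix (Fin 2) (Fin 2) ℝ :=
  ∑ t ∈ Finset.Icc 1 i,
    Matrix.vecMulVec (WithLp.equiv 2 (Fin 2 → ℝ) (S.Z t ω))
      (WithLp.equiv 2 (Fin 2 → ℝ) (S.Z t ω))

end AICMSS

/-- Conditional expectation of `g` given the σ-algebra `m` (notation-free wrapper). -/
def cexp {Ω : Type*} {m0 : MeasurableSpace Ω} (P : Measure Ω) (m : MeasurableSpace Ω)
    (g : Ω → ℝ) : Ω → ℝ := P[g|m]

/-- Conditional probability of the event `s` given the σ-algebra `m`. -/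
def cprob {Ω : Type*} {m0 : MeasurableSpace Ω} (P : Measure Ω) (m : MeasurableSpace Ω)
    (s : Set Ω) : Ω → ℝ := cexp P m (s.indicator fun _ => (1 : ℝ))

/-- The quadratic form `ζᵀ Γ ζ`. -/
def quadForm (Γ : Matrix (Fin 2) (Fin 2) ℝ) (ζ : E2) : ℝ :=
  dotProduct (WithLp.equiv 2 (Fin 2 → ℝ) ζ)
    (Γ.mulVec (WithLp.equiv 2 (Fin 2 → ℝ) ζ))

/-- The `(k, Γ, p)`-block martingale small-ball condition. -/
def BMSB {Ω : Type*} [m0 : MeasurableSpace Ω] (P : Measure Ω)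
    (Z : ℕ → Ω → E2) (k : ℕ) (Γ : Matrix (Fin 2) (Fin 2) ℝ) (p : ℝ) : Prop :=
  ∀ F : Filtration ℕ m0,
    (∀ ζ : E2, Adapted F fun t ω => (⟪ζ, Z t ω⟫ : ℝ)) →
    ∀ ζ : E2, ‖ζ‖ = 1 → ∀ j : ℕ,
      ∀ᵐ ω ∂P, p ≤ (k : ℝ)⁻¹ * ∑ i ∈ Finset.Icc 1 k,
        cprob P (F j) {ω' | Real.sqrt (quadForm Γ ζ) ≤ |⟪ζ, Z (j + i) ω'⟫|} ω

/-- Minimum eigenvalue of a (Hermitian) real matrix. -/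
def minEig (A : Matrix (Fin 2) (Fin 2) ℝ) : ℝ :=
  if h : A.IsHermitian then ⨅ i, h.eigenvalues i else 0

/-- Maximum eigenvalue of a (Hermitian) real matrix. -/
def maxEig (A : Matrix (Fin 2) (Fin 2) ℝ) : ℝ :=
  if h : A.IsHermitian then ⨆ i, h.eigenvalues i else 0


/-!
`V_{t+1}` is independent of `F_t`: by induction on `s`, every `X_s` and `U_s` with `s ≤ t`,
including the least-squares gain `G_s` (through an explicit formula for the Moore–Penrose inverse
of a `2 × 2` matrix), is a measurable function of the noise `W_s, V_s`, `s ≤ t`.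
The inner conditional expectation `g` is `F_t`-measurable, and testing against
`h = sign (ζ₂ V_{t+1})`, `|h| ≤ 1`, gives pointwise `|g + ζ₂ V_{t+1}| ≥ g h + |ζ₂| |V_{t+1}|`.
Conditioning on `F_t`, `E[g h | F_t] = g E[h] = 0` because the uniform law is symmetric, while
`E |V_{t+1}| = C / 2`.
-/

namespace Matrix

variable {m n R : Type*} [Fintype m] [Fintype n] [CommRing R]

def IsMoorePenroseInverse (A : Matrix m n R) (B : Matrix n m R) : Prop :=
  A * B * A = A ∧ B * A * B = B ∧ (A * B)ᵀ = A * B ∧ (B * A)ᵀ = B * A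

namespace IsMoorePenroseInverse

variable {A : Matrix m n R} {B B' : Matrix n m R}

theorem transpose (hB : A.IsMoorePenroseInverse B) : Aᵀ.IsMoorePenroseInverse Bᵀ := by
  obtain ⟨h₁, h₂, h₃, h₄⟩ := hB
  exact ⟨by rw [← transpose_mul, ← transpose_mul, ← Matrix.mul_assoc, h₁],
    by rw [← transpose_mul, ← transpose_mul, ← Matrix.mul_assoc, h₂],
    by rw [← transpose_mul, transpose_transpose, h₄],
    by rw [← transpose_mul, transpose_transpose, h₃]⟩

theorem mul_eq_mul (hB : A.IsMoorePenroseInverse B) (hB' : A.IsMoorePenroseInverse B') :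
    A * B = A * B' :=
  calc A * B = A * B' * A * B := by rw [hB'.1]
    _ = (A * B')ᵀ * (A * B)ᵀ := by rw [hB'.2.2.1, hB.2.2.1, Matrix.mul_assoc (A * B')]
    _ = (A * B * (A * B'))ᵀ := (transpose_mul _ _).symm
    _ = A * B' := by rw [← Matrix.mul_assoc, hB.1, hB'.2.2.1]

theorem unique (hB : A.IsMoorePenroseInverse B) (hB' : A.IsMoorePenroseInverse B') : B = B' := by
  have hBA : B * A = B' * A := by
    simpa using congrArg Matrix.transpose (hB.transpose.mul_eq_mul hB'.transpose)
  calc B = B * A * B' := by rw [Matrix.mul_assoc, ← hB.mul_eq_mul hB', ← Matrix.mul_assoc, hB.2.1]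
    _ = B' := by rw [hBA, hB'.2.1]

end IsMoorePenroseInverse

theorem pinv_eq_of_isMoorePenroseInverse {k l : ℕ} {A : Matrix (Fin k) (Fin l) ℝ}
    {B : Matrix (Fin l) (Fin k) ℝ} (hB : A.IsMoorePenroseInverse B) : pinv A = B := by
  have h : ∃ B, A.IsMoorePenroseInverse B := ⟨B, hB⟩
  exact (dif_pos h).trans (h.choose_spec.unique hB)

theorem mul_transpose_mul_of_det_eq_zero (A : Matrix (Fin 2) (Fin 2) R) (h : A.det = 0) :
    A * Aᵀ * A = (Aᵀ * A).trace • A := by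
  rw [det_fin_two] at h
  ext i j
  fin_cases i <;> fin_cases j <;> simp [Matrix.mul_apply, Fin.sum_univ_two, trace_fin_two]
  · linear_combination (-A 1 1) * h
  · linear_combination A 1 0 * h
  · linear_combination A 0 1 * h
  · linear_combination (-A 0 0) * h

/- A singular 2 × 2 matrix is `u vᵀ`, so `A Aᵀ A = ‖u‖² ‖v‖² A = tr (Aᵀ A) • A` and `Aᵀ / tr (Aᵀ A)`
satisfies the Penrose equations; at `A = 0` the junk value `0⁻¹ = 0` still gives `0`. -/
theorem pinv_fin_two (A : Matrix (Fin 2) (Fin 2) ℝ) :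
    pinv A = if A.det = 0 then (Aᵀ * A).trace⁻¹ • Aᵀ else A⁻¹ := by
  apply pinv_eq_of_isMoorePenroseInverse
  split_ifs with hdet
  · rcases eq_or_ne A 0 with rfl | hA
    · simp [IsMoorePenroseInverse]
    have hc : (Aᵀ * A).trace ≠ 0 := by
      simpa using (trace_conjTranspose_mul_self_eq_zero_iff (A := A)).not.2 hA
    have hAAA := A.mul_transpose_mul_of_det_eq_zero hdet
    have hAAA' : Aᵀ * A * Aᵀ = (Aᵀ * A).trace • Aᵀ := by
      simpa [trace_mul_comm A] using Aᵀ.mul_transpose_mul_of_det_eq_zero (by rwa [det_transpose])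
    refine ⟨?_, ?_, ?_, ?_⟩
    · rw [Matrix.mul_smul, Matrix.smul_mul, hAAA, smul_smul, inv_mul_cancel₀ hc, one_smul]
    · rw [Matrix.smul_mul, Matrix.smul_mul, Matrix.mul_smul, hAAA', smul_smul, smul_smul,
        mul_assoc, inv_mul_cancel₀ hc, mul_one]
    · rw [Matrix.mul_smul, transpose_smul, transpose_mul, transpose_transpose]
    · rw [Matrix.smul_mul, transpose_smul, transpose_mul, transpose_transpose]
  · have hu : IsUnit A.det := isUnit_iff_ne_zero.2 hdet
    simp [IsMoorePenroseInverse, mul_nonsing_inv _ hu, nonsing_inv_mul _ hu]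

-- Mathlib gives matrices no σ-algebra; the entrywise one is the Borel σ-algebra.
instance {k l : Type*} : MeasurableSpace (Matrix k l ℝ) := MeasurableSpace.pi

instance {k l : Type*} [Countable k] [Countable l] : BorelSpace (Matrix k l ℝ) :=
  inferInstanceAs (BorelSpace (k → l → ℝ))

instance {k l : Type*} [Countable k] [Countable l] : SecondCountableTopology (Matrix k l ℝ) :=
  inferInstanceAs (SecondCountableTopology (k → l → ℝ))

theorem measurable_pinv_fin_two :
    Measurable (pinv : Matrix (Fin 2) (Fin 2) ℝ → Matrix (Fin 2) (Fin 2) ℝ) := by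
  have hdet : Measurable fun A : Matrix (Fin 2) (Fin 2) ℝ => A.det :=
    continuous_id.matrix_det.measurable
  rw [funext pinv_fin_two]
  refine Measurable.ite (hdet (measurableSet_singleton 0)) ?_ ?_
  · exact (continuous_id.matrix_transpose.matrix_mul continuous_id).matrix_trace.measurable.inv.smul
      continuous_id.matrix_transpose.measurable
  · have hinv (A : Matrix (Fin 2) (Fin 2) ℝ) : A⁻¹ = A.det⁻¹ • A.adjugate := by
      rw [inv_def, Ring.inverse_eq_inv']
    rw [funext hinv]
    exact hdet.inv.smul continuous_id.matrix_adjugate.measurable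

theorem measurable_leastSquares {k : ℕ} :
    Measurable fun p : Matrix (Fin k) (Fin 2) ℝ × (Fin k → ℝ) =>
      (pinv (p.1ᵀ * p.1) * p.1ᵀ) *ᵥ p.2 := by
  have hP : Measurable fun p : Matrix (Fin k) (Fin 2) ℝ × (Fin k → ℝ) => pinv (p.1ᵀ * p.1) :=
    measurable_pinv_fin_two.comp
      (continuous_fst.matrix_transpose.matrix_mul continuous_fst).measurable
  have hΨ : Measurable
      fun q : Matrix (Fin 2) (Fin 2) ℝ × (Matrix (Fin k) (Fin 2) ℝ × (Fin k → ℝ)) =>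
        (q.1 * q.2.1ᵀ) *ᵥ q.2.2 :=
    ((continuous_fst.matrix_mul continuous_snd.fst.matrix_transpose).matrix_mulVec
      continuous_snd.snd).measurable
  exact (hΨ.comp (hP.prodMk measurable_id) :)

end Matrix

theorem measurable_sign_cast : Measurable fun x : ℝ => (SignType.sign x : ℝ) := by
  refine Monotone.measurable fun a b hab => ?_
  have := SignType.sign.monotone hab
  revert this
  cases SignType.sign a <;> cases SignType.sign b <;> simp +decide

theorem abs_sign_le_one {α : Type*} [Ring α] [LinearOrder α] [IsStrictOrderedRing α] (x : α) :
    |(SignType.sign x : α)| ≤ 1 := by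
  cases SignType.sign x <;> simp

theorem abs_mul_integral_abs_le_condExp_abs_add {Ω : Type*} {m m0 : MeasurableSpace Ω}
    {P : Measure Ω} [IsProbabilityMeasure P] (hm : m ≤ m0) {g V : Ω → ℝ}
    (hg : StronglyMeasurable[m] g) (hgi : Integrable g P) (hV : Measurable V)
    (hVi : Integrable V P) (hind : Indep (MeasurableSpace.comap V inferInstance) m P)
    (hsymm : ∫ ω, (SignType.sign (V ω) : ℝ) ∂P = 0) (c : ℝ) :
    ∀ᵐ ω ∂P, |c| * ∫ ω, |V ω| ∂P ≤ P[fun ω => |g ω + c * V ω| | m] ω := by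
  set h : Ω → ℝ := fun ω => SignType.sign (c * V ω)
  have hh_comap : StronglyMeasurable[MeasurableSpace.comap V inferInstance] h :=
    (measurable_sign_cast.comp ((comap_measurable V).const_mul c)).stronglyMeasurable
  have hh_bdd : ∀ ω, |h ω| ≤ 1 := fun ω => abs_sign_le_one _
  have hh_int : Integrable h P :=
    (integrable_const (1 : ℝ)).mono' (hh_comap.mono hV.comap_le).aestronglyMeasurable
      (ae_of_all _ hh_bdd)
  have hh_mean : ∫ ω, h ω ∂P = 0 := by
    simp only [h, sign_mul, SignType.coe_mul, integral_const_mul, hsymm, mul_zero]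
  have h_pointwise : ∀ ω, g ω * h ω + |c| * |V ω| ≤ |g ω + c * V ω| := fun ω =>
    calc g ω * h ω + |c| * |V ω| = (g ω + c * V ω) * h ω := by
          rw [← abs_mul, ← sign_mul_self (c * V ω)]; ring
      _ ≤ |g ω + c * V ω| * |h ω| := by rw [← abs_mul]; exact le_abs_self _
      _ ≤ |g ω + c * V ω| := mul_le_of_le_one_right (abs_nonneg _) (hh_bdd ω)
  have hgh_int : Integrable (g * h) P :=
    hgi.mul_bdd hh_int.aestronglyMeasurable (ae_of_all _ hh_bdd)
  have hk_int : Integrable (fun ω => |c| * |V ω|) P := hVi.abs.const_mul _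
  have hE_gh : P[g * h | m] =ᵐ[P] fun ω => g ω * ∫ ω, h ω ∂P :=
    (condExp_mul_of_stronglyMeasurable_left hg hgh_int hh_int).trans
      ((condExp_indep_eq hV.comap_le hm hh_comap hind).mono fun ω hω => by simp [hω])
  have hE_k : P[fun ω => |c| * |V ω| | m] =ᵐ[P] fun _ => |c| * ∫ ω, |V ω| ∂P := by
    refine (condExp_indep_eq hV.comap_le hm ?_ hind).mono fun ω hω => by
      rw [hω, integral_const_mul]
    exact ((measurable_abs.comp (comap_measurable V)).const_mul _).stronglyMeasurable
  filter_upwards [condExp_mono (hgh_int.add hk_int) (hgi.add (hVi.const_mul c)).abs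
      (ae_of_all _ h_pointwise), condExp_add hgh_int hk_int m, hE_gh, hE_k] with ω hmono hadd hgh hk
  rwa [hadd, Pi.add_apply, hgh, hk, hh_mean, mul_zero, zero_add] at hmono

theorem integral_uniformLaw {C : ℝ} (hC : 0 ≤ C) (f : ℝ → ℝ) :
    ∫ x, f x ∂uniformLaw C = (2 * C)⁻¹ * ∫ x in -C..C, f x := by
  rw [uniformLaw, integral_smul_measure, ENNReal.toReal_inv, ENNReal.toReal_ofReal (by linarith),
    intervalIntegral.integral_of_le (by linarith), integral_Icc_eq_integral_Ioc, smul_eq_mul]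

theorem integral_sign_uniformLaw {C : ℝ} (hC : 0 ≤ C) :
    ∫ x, (SignType.sign x : ℝ) ∂uniformLaw C = 0 := by
  have hodd : ∫ x in -C..C, (SignType.sign (-x) : ℝ) = ∫ x in -C..C, (SignType.sign x : ℝ) := by
    rw [intervalIntegral.integral_comp_neg (fun x => (SignType.sign x : ℝ)), neg_neg]
  simp only [Left.sign_neg, SignType.coe_neg, intervalIntegral.integral_neg] at hodd
  rw [integral_uniformLaw hC, (by linarith : ∫ x in -C..C, (SignType.sign x : ℝ) = 0), mul_zero]

theorem integral_abs_uniformLaw {C : ℝ} (hC : 0 < C) : ∫ x, |x| ∂uniformLaw C = C / 2 := by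
  have hright : ∫ x in (0 : ℝ)..C, |x| = C ^ 2 / 2 := by
    rw [intervalIntegral.integral_congr fun x hx => abs_of_nonneg (Set.uIcc_of_le hC.le ▸ hx).1,
      integral_id]
    ring
  have hleft : ∫ x in -C..0, |x| = C ^ 2 / 2 := by
    have := intervalIntegral.integral_comp_neg (a := 0) (b := C) fun x => |x|
    simp only [abs_neg, neg_zero] at this
    rw [← this, hright]
  rw [integral_uniformLaw hC.le, ← intervalIntegral.integral_add_adjacent_intervals
    (continuous_abs.intervalIntegrable _ _) (continuous_abs.intervalIntegrable _ _), hleft, hright]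
  field_simp
  ring

theorem integrable_id_uniformLaw {C : ℝ} (hC : 0 < C) : Integrable id (uniformLaw C) :=
  continuous_id.integrableOn_Icc.integrable.smul_measure (by simp [hC])

theorem measurable_sat (r : ℝ) : Measurable (sat r) :=
  Measurable.ite (measurableSet_le measurable_abs measurable_const) measurable_id
    ((measurable_const.mul measurable_id).div measurable_abs)

namespace AICMSS

-- `m` is bound before the ambient instance, so instance resolution keeps finding the latter.
variable {Ω : Type*} {m : MeasurableSpace Ω} [MeasurableSpace Ω] {P : Measure Ω}
  (S : AICMSS Ω P)

theorem measurable_θhat {n : ℕ} (hn : 1 ≤ n) (hX : ∀ k ≤ n + 1, Measurable[m] (S.X k))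
    (hU : ∀ k ≤ n, Measurable[m] (S.U k)) : Measurable[m] (S.θhat n) := by
  have hM : Measurable[m] fun ω => Matrix.of fun (s : Fin n) (j : Fin 2) =>
      if j = 0 then S.X (s.1 + 1) ω else S.U (s.1 + 1) ω := by
    refine (@measurable_pi_iff Ω _ _ m _ _).2 fun s =>
      (@measurable_pi_iff Ω _ _ m _ _).2 fun j => ?_
    by_cases hj : j = 0
    · simp [hj]; exact hX _ (by omega)
    · simp [hj]; exact hU _ (by omega)
  have hy : Measurable[m] fun ω (s : Fin n) => S.X (s.1 + 2) ω :=
    (@measurable_pi_iff Ω _ _ m _ _).2 fun s => hX _ (by omega)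
  rw [funext fun ω => S.hθ n ω hn]
  exact ((WithLp.measurable_toLp 2 _).comp (Matrix.measurable_leastSquares.comp (hM.prodMk hy)) :)

theorem measurable_G {s : ℕ} (hX : ∀ k ≤ s, Measurable[m] (S.X k))
    (hU : ∀ k < s, Measurable[m] (S.U k)) : Measurable[m] (S.G s) := by
  rcases le_or_gt s 1 with hs | hs
  · rw [funext fun ω => S.hGinit s ω hs]
    exact measurable_const
  obtain ⟨n, rfl⟩ : ∃ n, s = n + 1 := ⟨s - 1, by omega⟩
  have hθ := S.measurable_θhat (n := n) (by omega) hX fun k hk => hU k (by omega)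
  have hθ_apply (j : Fin 2) : Measurable[m] fun ω => WithLp.equiv 2 (Fin 2 → ℝ) (S.θhat n ω) j :=
    ((measurable_pi_apply j).comp ((WithLp.measurable_ofLp 2 _).comp hθ) :)
  rw [show S.G (n + 1) = _ from funext fun ω => S.hG (n + 1) ω hs]
  exact ((hθ_apply 0).div (hθ_apply 1)).neg

theorem measurable_X_U {t : ℕ} (hW : ∀ s ≤ t, Measurable[m] (S.W s))
    (hV : ∀ s ≤ t, Measurable[m] (S.V s)) (s : ℕ) (hs : s ≤ t) :
    Measurable[m] (S.X s) ∧ Measurable[m] (S.U s) := by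
  induction s using Nat.strong_induction_on with
  | _ s ih =>
  have hXs : Measurable[m] (S.X s) := by
    cases s with
    | zero =>
      rw [funext S.hX0]
      exact measurable_const
    | succ r =>
      obtain ⟨hXr, hUr⟩ := ih r (by omega) (by omega)
      rw [funext (S.hXrec r)]
      exact ((hXr.const_mul _).add (hUr.const_mul _)).add (hW r (by omega))
  have hG := S.measurable_G (s := s)
    (fun k hk => hk.lt_or_eq.elim (fun hk => (ih k hk (by omega)).1) (· ▸ hXs))
    (fun k hk => (ih k hk (by omega)).2)
  refine ⟨hXs, ?_⟩
  rw [funext (S.hU s)]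
  exact ((measurable_sat _).comp (hG.mul hXs)).add (hV s hs)

@[reducible] def noiseUpTo (t : ℕ) : MeasurableSpace Ω :=
  ⨆ i ∈ {i : ℕ ⊕ ℕ | Sum.elim id id i ≤ t},
    MeasurableSpace.comap (Sum.elim S.W S.V i) inferInstance

theorem measurable_noise_noiseUpTo {t : ℕ} {i : ℕ ⊕ ℕ} (hi : Sum.elim id id i ≤ t) :
    Measurable[S.noiseUpTo t] (Sum.elim S.W S.V i) :=
  (comap_measurable _).mono (le_iSup₂ (f := fun i (_ : i ∈ {i : ℕ ⊕ ℕ | Sum.elim id id i ≤ t}) =>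
    MeasurableSpace.comap (Sum.elim S.W S.V i) inferInstance) i hi) le_rfl

theorem natural_le_noiseUpTo (hSM : ∀ t, StronglyMeasurable (S.Z t)) (t : ℕ) :
    Filtration.natural S.Z hSM t ≤ S.noiseUpTo t := by
  refine iSup₂_le fun s hs => Measurable.comap_le ?_
  obtain ⟨hX, hU⟩ := S.measurable_X_U (fun k hk => S.measurable_noise_noiseUpTo (i := .inl k) hk)
    (fun k hk => S.measurable_noise_noiseUpTo (i := .inr k) hk) s hs
  have hXU : Measurable[S.noiseUpTo t] fun ω => ![S.X s ω, S.U s ω] :=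
    (@measurable_pi_iff Ω _ _ (S.noiseUpTo t) _ _).2 fun j => by fin_cases j; exacts [hX, hU]
  exact ((WithLp.measurable_toLp 2 _).comp hXU :)

theorem indep_noiseUpTo_V (t : ℕ) :
    Indep (S.noiseUpTo t) (MeasurableSpace.comap (S.V (t + 1)) inferInstance) P := by
  refine indep_of_indep_of_le_right (indep_biSup_compl (fun i => ?_) S.hIndep _) ?_
  · cases i
    exacts [(S.measW _).comap_le, (S.measV _).comap_le]
  · exact le_iSup₂ (f := fun i (_ : i ∈ {i : ℕ ⊕ ℕ | Sum.elim id id i ≤ t}ᶜ) =>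
      MeasurableSpace.comap (Sum.elim S.W S.V i) inferInstance) (Sum.inr (t + 1)) (by simp)

theorem integrable_V (t : ℕ) : Integrable (S.V t) P :=
  (integrable_map_measure aestronglyMeasurable_id (S.measV t).aemeasurable).1
    (S.hVlaw t ▸ integrable_id_uniformLaw S.hCpos)

theorem integral_sign_V (t : ℕ) : ∫ ω, (SignType.sign (S.V t ω) : ℝ) ∂P = 0 := by
  rw [← integral_map (S.measV t).aemeasurable measurable_sign_cast.aestronglyMeasurable, S.hVlaw,
    integral_sign_uniformLaw S.hCpos.le]

theorem integral_abs_V (t : ℕ) : ∫ ω, |S.V t ω| ∂P = S.C / 2 := by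
  rw [← integral_map (S.measV t).aemeasurable measurable_abs.aestronglyMeasurable, S.hVlaw,
    integral_abs_uniformLaw S.hCpos]

end AICMSS

/-- **Lemma (lower bound on `E[|B_{t+1}(ζ)| | F_t]`).** -/
theorem lower_bound_B {Ω : Type*} [MeasurableSpace Ω] (P : Measure Ω)
    [IsProbabilityMeasure P] (S : AICMSS Ω P)
    (hSM : ∀ t, StronglyMeasurable (S.Z t)) :
    ∀ ζ : E2, ∀ t : ℕ,
      ∀ᵐ ω ∂P,
        |WithLp.equiv 2 (Fin 2 → ℝ) ζ 1| * S.C / 2 ≤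
          cexp P ((MeasureTheory.Filtration.natural S.Z hSM) t)
            (fun ω' =>
              |cexp P ((MeasureTheory.Filtration.natural S.Z hSM) t)
                  (fun ω'' => WithLp.equiv 2 (Fin 2 → ℝ) ζ 0 * S.X (t + 1) ω'' +
                    WithLp.equiv 2 (Fin 2 → ℝ) ζ 1 *
                      sat S.D (S.G (t + 1) ω'' * S.X (t + 1) ω'')) ω' +
                WithLp.equiv 2 (Fin 2 → ℝ) ζ 1 * S.V (t + 1) ω'|) ω := by
  intro ζ t
  set F := Filtration.natural S.Z hSM
  have hind : Indep (MeasurableSpace.comap (S.V (t + 1)) inferInstance) (F t) P :=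
    indep_of_indep_of_le_right (S.indep_noiseUpTo_V t).symm (S.natural_le_noiseUpTo hSM t)
  filter_upwards [abs_mul_integral_abs_le_condExp_abs_add (F.le t) stronglyMeasurable_condExp
    integrable_condExp (S.measV _) (S.integrable_V _) hind (S.integral_sign_V _)
    (WithLp.equiv 2 (Fin 2 → ℝ) ζ 1)] with ω hω
  rwa [S.integral_abs_V, ← mul_div_assoc] at hω

end
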